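/- Fix a ladder system on ω₁. Let u = (u_α)_{α<ω₁} be a sequence in βℕ such that u_α is nonprincipal for every α ∈ Lim(ω₁), let (f_α)_{α<ω₁} be an admissible family for u, and set v_α := f̃_α(u_α). Then u_β ≤_RK v_α whenever β ≤ α < ω₁. -/

import Mathlib

/-! By the universal property of `βℕ`, `v_α = f̃_α(u_α)` is the `u_α`-sum `u_α.bind f_α` of the
ultrafilters `f_α(j)`. Since `f_α` is injective with countable discrete range, there is a map
`g : ℕ → ℕ` with `g⁻¹{j} ∈ f_α(j)` for all `j`; it pushes `v_α` onto `u_α`, and it glues maps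
witnessing `t ≤_RK f_α(j)` for `u_α`-almost all `j` into one witnessing `t ≤_RK v_α`.
Now induct on `α`: for `β < α`, `u_α`-almost every `f_α(j)` is isomorphic to some `v_γ` with
`β ≤ γ < α` (at a limit `α` because the nonprincipal `u_α` contains every tail of `ℕ`, and a tail
of the ladder of `α` lies above `β`). -/

/-- The tensor (Fubini) product of ultrafilters: `S ∈ tensor u v` iff
`{x | {y | (x, y) ∈ S} ∈ v} ∈ u`. -/
def tensor {X Y : Type*} (u : Ultrafilter X) (v : Ultrafilter Y) : Ultrafilter (X × Y) :=
  u.bind fun x => v.map fun y => (x, y)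

/-- The Rudin–Keisler preorder: `u ≤_RK v` iff `u` is the image of `v` under some map. -/
def RKLE {X Y : Type*} (u : Ultrafilter X) (v : Ultrafilter Y) : Prop :=
  ∃ f : Y → X, Ultrafilter.map f v = u

/-- Isomorphism of ultrafilters: image under a bijection. -/
def UIso {X Y : Type*} (u : Ultrafilter X) (v : Ultrafilter Y) : Prop :=
  ∃ f : Y → X, Function.Bijective f ∧ Ultrafilter.map f v = u

/-- An ultrafilter is principal iff it is `pure x` for some point `x`. -/
def IsPrincipal {X : Type*} (u : Ultrafilter X) : Prop := ∃ x, u = pure x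

/-- A weak P-point: a nonprincipal ultrafilter on `ℕ` not in the closure of any countable
set of ultrafilters avoiding it and all principal ultrafilters. -/
def WeakPPoint (u : Ultrafilter ℕ) : Prop :=
  ¬ IsPrincipal u ∧ ∀ A : Set (Ultrafilter ℕ), A.Countable → u ∉ A →
    (∀ x ∈ A, ¬ IsPrincipal x) → u ∉ closure A

/-- A space `Z` is `u`-compact iff every pushforward of `u` to `Z` converges. -/
def UCompact {X : Type*} (u : Ultrafilter X) (Z : Type*) [TopologicalSpace Z] : Prop :=
  ∀ f : X → Z, ∃ z : Z, ↑(Ultrafilter.map f u) ≤ nhds z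

/-- The Comfort preorder: `u ≤_C v` iff every `v`-compact space is `u`-compact. -/
def ComfortLE {X Y : Type*} (u : Ultrafilter X) (v : Ultrafilter Y) : Prop :=
  ∀ (Z : Type*) [TopologicalSpace Z], UCompact v Z → UCompact u Z

/-- The first uncountable ordinal `ω₁`. -/
noncomputable def omega1 : Ordinal := (Cardinal.aleph 1).ord

/-- A ladder system on `ω₁`: for each nonzero limit `α < ω₁`, a strictly increasing
`ω`-sequence of ordinals cofinal in `α`. -/
def IsLadderSystem (L : Ordinal → ℕ → Ordinal) : Prop :=
  ∀ α : Ordinal, α < omega1 → Order.IsSuccLimit α →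
    StrictMono (L α) ∧ (∀ i : ℕ, L α i < α) ∧ ∀ β < α, ∃ i : ℕ, β ≤ L α i

/-- `vSeq u f α = f̃_α(u_α)`. -/
noncomputable def vSeq (u : Ordinal → Ultrafilter ℕ) (f : Ordinal → ℕ → Ultrafilter ℕ)
    (α : Ordinal) : Ultrafilter ℕ :=
  Ultrafilter.extend (f α) (u α)

/-- `(f_α)_{α<ω₁}` is admissible for `u = (u_α)_{α<ω₁}` (w.r.t. the ladder system `L`):
writing `v_α := f̃_α(u_α)`, the map `f_0` is injective with principal values; at a successor
`β+1`, `f_{β+1}` is injective with discrete range and all values isomorphic to `v_β`; at a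
nonzero limit `α`, `f_α` is injective with discrete range and `f_α(i) ≅ v_{α_i}`. -/
def Admissible (L : Ordinal → ℕ → Ordinal) (u : Ordinal → Ultrafilter ℕ)
    (f : Ordinal → ℕ → Ultrafilter ℕ) : Prop :=
  (Function.Injective (f 0) ∧ ∀ i : ℕ, IsPrincipal (f 0 i)) ∧
  (∀ β : Ordinal, β + 1 < omega1 →
    Function.Injective (f (β + 1)) ∧ DiscreteTopology (Set.range (f (β + 1))) ∧
    ∀ i : ℕ, UIso (f (β + 1) i) (vSeq u f β)) ∧
  ∀ α : Ordinal, α < omega1 → Order.IsSuccLimit α →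
    Function.Injective (f α) ∧ DiscreteTopology (Set.range (f α)) ∧
    ∀ i : ℕ, UIso (f α i) (vSeq u f (L α i))

open Filter Set

theorem Ultrafilter.extend_eq_bind {X Y : Type*} (F : X → Ultrafilter Y) (w : Ultrafilter X) :
    Ultrafilter.extend F w = w.bind F := by
  rw [ultrafilter_extend_eq_iff, ultrafilter_converges_iff]
  rfl

theorem Ultrafilter.le_atTop_of_not_isPrincipal {w : Ultrafilter ℕ} (hw : ¬ IsPrincipal w) :
    (w : Filter ℕ) ≤ atTop :=
  Nat.cofinite_eq_atTop ▸ w.le_cofinite_or_eq_pure.resolve_right hw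

theorem RKLE.trans {X Y Z : Type*} {a : Ultrafilter X} {b : Ultrafilter Y} {c : Ultrafilter Z}
    (hab : RKLE a b) (hbc : RKLE b c) : RKLE a c := by
  obtain ⟨k, rfl⟩ := hab
  obtain ⟨m, rfl⟩ := hbc
  exact ⟨k ∘ m, (Ultrafilter.map_map c m k).symm⟩

theorem UIso.rkle_symm {X Y : Type*} {a : Ultrafilter X} {b : Ultrafilter Y} (h : UIso a b) :
    RKLE b a := by
  obtain ⟨k, hk, rfl⟩ := h
  let e := Equiv.ofBijective k hk
  refine ⟨e.symm, ?_⟩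
  rw [Ultrafilter.map_map, show e.symm ∘ k = id from e.symm_comp_self, Ultrafilter.map_id]

theorem exists_mem_forall_notMem_of_discreteTopology_range {X Y : Type*} {F : X → Ultrafilter Y}
    (hinj : Function.Injective F) (hd : DiscreteTopology (range F)) (x : X) :
    ∃ A ∈ F x, ∀ x' ≠ x, A ∉ F x' := by
  obtain ⟨_, ⟨⟨A, rfl⟩, hA⟩, hAF⟩ :=
    ultrafilterBasis_is_basis.nhds_hasBasis.exists_inter_eq_singleton_of_mem_discrete
      (isDiscrete_iff_discreteTopology.2 hd) (mem_range_self x)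
  exact ⟨A, hA, fun x' hx' hA' => hx' (hinj (hAF.subset ⟨hA', mem_range_self x'⟩))⟩

theorem exists_preimage_singleton_mem_of_discreteTopology_range {Y : Type*}
    {F : ℕ → Ultrafilter Y} (hinj : Function.Injective F) (hd : DiscreteTopology (range F)) :
    ∃ g : Y → ℕ, ∀ j, g ⁻¹' {j} ∈ F j := by
  classical
  choose A hAF hA using exists_mem_forall_notMem_of_discreteTopology_range hinj hd
  refine ⟨fun y => if h : ∃ j, y ∈ A j then Nat.find h else 0, fun j => ?_⟩
  have hfirst : A j ∩ ⋂ k ∈ Iio j, (A k)ᶜ ∈ F j :=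
    inter_mem (hAF j) <| (biInter_mem (finite_Iio j)).2 fun k hk =>
      Ultrafilter.compl_mem_iff_notMem.2 (hA k j (ne_of_gt hk))
  filter_upwards [hfirst] with y ⟨hyj, hyk⟩
  rw [mem_preimage, mem_singleton_iff, dif_pos ⟨j, hyj⟩, Nat.find_eq_iff]
  exact ⟨hyj, fun k hk => mem_iInter₂.1 hyk k hk⟩

section Bind

variable {X Y : Type*} {F : X → Ultrafilter Y} {g : Y → X}

theorem Ultrafilter.map_bind_of_preimage_singleton_mem (hg : ∀ x, g ⁻¹' {x} ∈ F x)
    (w : Ultrafilter X) : (w.bind F).map g = w := by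
  refine Ultrafilter.eq_of_le fun S hS => ?_
  change {x | g ⁻¹' S ∈ F x} ∈ w
  filter_upwards [hS] with x hx
  exact mem_of_superset (hg x) (preimage_mono (singleton_subset_iff.2 hx))

theorem rkle_bind_of_eventually {Z : Type*} (hg : ∀ x, g ⁻¹' {x} ∈ F x) {w : Ultrafilter X}
    {t : Ultrafilter Z} (h : ∀ᶠ x in w, RKLE t (F x)) : RKLE t (w.bind F) := by
  have : Nonempty Z := ⟨(t.nonempty_of_mem univ_mem).some⟩
  choose! H hH using fun x (hx : RKLE t (F x)) => hx
  refine ⟨fun y => H (g y) y, Ultrafilter.eq_of_le fun S hS => ?_⟩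
  change {x | _ ∈ F x} ∈ w
  filter_upwards [h] with x hx
  filter_upwards [hg x, Ultrafilter.mem_map.1 ((hH x hx).symm ▸ hS)] with y hgy hy
  rwa [mem_preimage, mem_singleton_iff.1 hgy]

end Bind

namespace Admissible

variable {L : Ordinal → ℕ → Ordinal} {u : Ordinal → Ultrafilter ℕ}
  {f : Ordinal → ℕ → Ultrafilter ℕ} {α β : Ordinal}

theorem exists_preimage_singleton_mem (hf : Admissible L u f) (hα : α < omega1) :
    ∃ g : ℕ → ℕ, ∀ j, g ⁻¹' {j} ∈ f α j := by
  rcases Ordinal.zero_or_succ_or_isSuccLimit α with rfl | ⟨γ, rfl⟩ | hlim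
  · obtain ⟨hinj, hpure⟩ := hf.1
    choose c hc using hpure
    refine ⟨Function.invFun c, fun j => ?_⟩
    rw [hc j, Ultrafilter.mem_pure, mem_preimage, mem_singleton_iff]
    exact Function.leftInverse_invFun (fun i k h => hinj (by rw [hc i, hc k, h])) j
  · rw [Order.succ_eq_add_one] at hα ⊢
    obtain ⟨hinj, hd, -⟩ := hf.2.1 γ hα
    exact exists_preimage_singleton_mem_of_discreteTopology_range hinj hd
  · obtain ⟨hinj, hd, -⟩ := hf.2.2 α hα hlim
    exact exists_preimage_singleton_mem_of_discreteTopology_range hinj hd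

theorem eventually_uIso_vSeq_of_lt (hL : IsLadderSystem L)
    (hu : ∀ α : Ordinal, α < omega1 → Order.IsSuccLimit α → ¬ IsPrincipal (u α))
    (hf : Admissible L u f) (hβα : β < α) (hα : α < omega1) :
    ∀ᶠ j in u α, ∃ γ, β ≤ γ ∧ γ < α ∧ UIso (f α j) (vSeq u f γ) := by
  rcases Ordinal.zero_or_succ_or_isSuccLimit α with rfl | ⟨γ, rfl⟩ | hlim
  · exact absurd hβα (zero_le (a := β)).not_gt
  · rw [Order.succ_eq_add_one] at hα
    exact .of_forall fun j =>
      ⟨γ, Order.lt_succ_iff.1 hβα, Order.lt_succ γ, (hf.2.1 γ hα).2.2 j⟩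
  · obtain ⟨hmono, hlt, hcof⟩ := hL α hα hlim
    obtain ⟨i, hi⟩ := hcof β hβα
    filter_upwards [Ultrafilter.le_atTop_of_not_isPrincipal (hu α hα hlim)
      (eventually_ge_atTop i)] with j hj
    exact ⟨L α j, hi.trans (hmono.monotone hj), hlt j, (hf.2.2 α hα hlim).2.2 j⟩

end Admissible

theorem stmt11 (L : Ordinal → ℕ → Ordinal) (hL : IsLadderSystem L)
    (u : Ordinal → Ultrafilter ℕ)
    (hu : ∀ α : Ordinal, α < omega1 → Order.IsSuccLimit α → ¬ IsPrincipal (u α))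
    (f : Ordinal → ℕ → Ultrafilter ℕ) (hf : Admissible L u f) :
    ∀ β α : Ordinal, β ≤ α → α < omega1 → RKLE (u β) (vSeq u f α) := by
  intro β α hβα hα
  induction α using WellFoundedLT.induction generalizing β with
  | _ α IH =>
  obtain ⟨g, hg⟩ := hf.exists_preimage_singleton_mem hα
  rw [vSeq, Ultrafilter.extend_eq_bind]
  rcases hβα.eq_or_lt with rfl | hβα
  · exact ⟨g, Ultrafilter.map_bind_of_preimage_singleton_mem hg (u β)⟩
  · refine rkle_bind_of_eventually hg ?_
    filter_upwards [hf.eventually_uIso_vSeq_of_lt hL hu hβα hα] with j ⟨γ, hβγ, hγα, hiso⟩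
    exact (IH γ hγα β hβγ (hγα.trans hα)).trans hiso.rkle_symm
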